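/- arXiv:2509.15446 — 3 statements merged into one kernel-verified Lean document; each statement's English description precedes it below -/
import Mathlib

section
/- For every real δ > 0 there exists a constant c > 0 (depending on δ) such that for all positive integers k, |(-δ)^{↑k} / (1+δ)^{↑k}| ≤ c · k^{-1-2δ}, where x^{↑k} = x(x+1)⋯(x+k-1) denotes the rising factorial. -/
/-!
Write `a k = |(-δ)^{↑k} / (1+δ)^{↑k}|`. For `n ≥ δ` the ratio `a (n+1) / a n` is
`(n - δ) / (n + 1 + δ)`, and the elementary bound `(t - 2δ)(t + 1)^{2δ} ≤ t^{1+2δ}` at `t = n + δ`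
(from `1 + x ≤ eˣ`) shows that `a n · (n + δ)^{1+2δ}` is non-increasing from `n = ⌈δ⌉` on.
Hence it is bounded, and so is `a k · k^{1+2δ}`.
-/

open Finset

/-- Rising factorial (Pochhammer symbol): `x^{↑k} = x(x+1)⋯(x+k-1)`. -/
noncomputable def risingFac (x : ℝ) (k : ℕ) : ℝ := ∏ j ∈ Finset.range k, (x + j)

open Real

lemma risingFac_succ (x : ℝ) (k : ℕ) : risingFac x (k + 1) = risingFac x k * (x + k) := by
  simp [risingFac, prod_range_succ]

lemma abs_risingFac_div_succ (x y : ℝ) (n : ℕ) :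
    |risingFac x (n + 1) / risingFac y (n + 1)| =
      |risingFac x n / risingFac y n| * |(x + n) / (y + n)| := by
  rw [risingFac_succ, risingFac_succ, mul_div_mul_comm, abs_mul]

lemma sub_mul_add_one_rpow_le {s t : ℝ} (hs : 0 ≤ s) (ht : 0 < t) :
    (t - s) * (t + 1) ^ s ≤ t ^ (1 + s) := by
  have h_add : t + 1 ≤ t * exp (1 / t) := by
    have := add_one_le_exp (1 / t)
    calc t + 1 = t * (1 / t + 1) := by field_simp; ring
      _ ≤ t * exp (1 / t) := by gcongr
  have h_sub : t - s ≤ t * exp (-(s / t)) := by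
    have := add_one_le_exp (-(s / t))
    calc t - s = t * (-(s / t) + 1) := by field_simp; ring
      _ ≤ t * exp (-(s / t)) := by gcongr
  calc (t - s) * (t + 1) ^ s ≤ t * exp (-(s / t)) * (t * exp (1 / t)) ^ s := by
        gcongr
    _ = t ^ (1 + s) := by
        rw [mul_rpow ht.le (exp_pos _).le, ← exp_mul, rpow_add ht, rpow_one,
          mul_mul_mul_comm, ← exp_add, show -(s / t) + 1 / t * s = 0 by ring, exp_zero, mul_one]

lemma bddAbove_range_of_eventually_succ_le {α : Type*} [Preorder α] [IsDirectedOrder α]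
    {f : ℕ → α} {N : ℕ} (hf : ∀ n ≥ N, f (n + 1) ≤ f n) : BddAbove (Set.range f) :=
  (Filter.isBoundedUnder_of_eventually_le (a := f N) (Filter.eventually_atTop.2
    ⟨N, fun _ hn => antitoneOn_nat_Ici_of_succ_le hf (le_refl N) hn hn⟩)).bddAbove_range

lemma abs_risingFac_neg_div_mul_rpow_succ_le {δ : ℝ} (hδ : 0 < δ) {n : ℕ} (hn : δ ≤ n) :
    |risingFac (-δ) (n + 1) / risingFac (1 + δ) (n + 1)| * (((n + 1 : ℕ) : ℝ) + δ) ^ (1 + 2 * δ)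
      ≤ |risingFac (-δ) n / risingFac (1 + δ) n| * ((n : ℝ) + δ) ^ (1 + 2 * δ) := by
  have h_den : 0 < 1 + δ + n := by positivity
  rw [abs_risingFac_div_succ, abs_of_nonneg (div_nonneg (by linarith) h_den.le)]
  set r := |risingFac (-δ) n / risingFac (1 + δ) n|
  calc r * ((-δ + n) / (1 + δ + n)) * (((n + 1 : ℕ) : ℝ) + δ) ^ (1 + 2 * δ)
      = r * ((n + δ - 2 * δ) * (n + δ + 1) ^ (2 * δ)) := by
        rw [show ((n + 1 : ℕ) : ℝ) + δ = 1 + δ + n by push_cast; ring, rpow_add h_den, rpow_one,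
          show (n : ℝ) + δ + 1 = 1 + δ + n by ring]
        field_simp
        ring
    _ ≤ r * ((n : ℝ) + δ) ^ (1 + 2 * δ) := by
        gcongr
        exact sub_mul_add_one_rpow_le (by positivity) (by positivity)

theorem stmt0 (δ : ℝ) (hδ : 0 < δ) :
    ∃ c > 0, ∀ k : ℕ, 1 ≤ k →
      |risingFac (-δ) k / risingFac (1 + δ) k| ≤ c * (k : ℝ) ^ (-1 - 2 * δ) := by
  obtain ⟨C, hC⟩ := bddAbove_range_of_eventually_succ_le (N := ⌈δ⌉₊)
    (f := fun n : ℕ => |risingFac (-δ) n / risingFac (1 + δ) n| * ((n : ℝ) + δ) ^ (1 + 2 * δ))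
    fun n hn => abs_risingFac_neg_div_mul_rpow_succ_le hδ (Nat.ceil_le.1 hn)
  refine ⟨max C 1, by positivity, fun k hk => ?_⟩
  have hk_pos : (0 : ℝ) < k := by exact_mod_cast hk
  rw [show -1 - 2 * δ = -(1 + 2 * δ) by ring, rpow_neg hk_pos.le, ← div_eq_mul_inv,
    le_div_iff₀ (by positivity)]
  calc |risingFac (-δ) k / risingFac (1 + δ) k| * (k : ℝ) ^ (1 + 2 * δ)
      ≤ |risingFac (-δ) k / risingFac (1 + δ) k| * ((k : ℝ) + δ) ^ (1 + 2 * δ) := by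
        gcongr
        linarith
    _ ≤ C := hC ⟨k, rfl⟩
    _ ≤ max C 1 := le_max_left C 1
end

section
/- Let n be a positive integer. Let A_n be the n×n tridiagonal matrix with [A_n]_{k,k} = −k², [A_n]_{k,k−1} = k(k+n)/2, [A_n]_{k,k+1} = k(k−n)/2, and let T_n be the n×n matrix with [T_n]_{a,b} = C(a,b)(−1)^b. Then T_n A_n T_n is upper bidiagonal with [T_n A_n T_n]_{k,k} = k(k−1)/2 − kn and [T_n A_n T_n]_{k,k+1} = k(n−k)/2. -/
/-
`T` is an involution (binomial inversion), so `T A T = B` amounts to `A T = T B`. Column `J` of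
`T` is `K ↦ (-1)^J C(K, J)`, and the three-term recurrence defining `A` sends `K ↦ C(K, J)` to a
combination of `C(K, J)` and `C(K, J - 1)` only, by Pascal's rule and the absorption identities;
the two coefficients are the entries of column `J` of the bidiagonal matrix `B`.
-/

open Finset Matrix

/-- The tridiagonal matrix `A_n` with `[A_n]_{k,k} = -k²`, `[A_n]_{k,k-1} = k(k+n)/2`,
`[A_n]_{k,k+1} = k(k-n)/2`, indices `1,…,n` realized on `Fin n` via `i ↦ i+1`. -/
noncomputable def Amat (n : ℕ) : Matrix (Fin n) (Fin n) ℝ :=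
  fun i j =>
    if (i : ℕ) = (j : ℕ) then -(((i : ℕ) + 1 : ℝ) ^ 2)
    else if (i : ℕ) = (j : ℕ) + 1 then (((i : ℕ) + 1 : ℝ) * (((i : ℕ) + 1) + n)) / 2
    else if (j : ℕ) = (i : ℕ) + 1 then (((i : ℕ) + 1 : ℝ) * (((i : ℕ) + 1 : ℝ) - n)) / 2
    else 0

/-- The matrix `T_n` with entries `[T_n]_{a,b} = C(a,b) (-1)^b`, indices `1,…,n`. -/
noncomputable def Tmat (n : ℕ) : Matrix (Fin n) (Fin n) ℝ :=
  fun a b => ((-1 : ℝ)) ^ ((b : ℕ) + 1) * (((a : ℕ) + 1).choose ((b : ℕ) + 1))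

theorem sum_range_neg_one_pow_mul_choose_mul_choose {a N : ℕ} (b : ℕ) (haN : a < N) :
    ∑ m ∈ range N, (-1 : ℤ) ^ m * a.choose m * m.choose b = if a = b then (-1) ^ b else 0 := by
  obtain ⟨e, rfl⟩ := Nat.exists_eq_add_of_lt haN
  rw [show a + e + 1 = (a + 1) + e by omega, sum_range_add]
  have htail : ∑ m ∈ range e, (-1 : ℤ) ^ (a + 1 + m) * a.choose (a + 1 + m) *
      (a + 1 + m).choose b = 0 :=
    sum_eq_zero fun m _ => by simp [Nat.choose_eq_zero_of_lt (by omega : a < a + 1 + m)]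
  rw [htail, add_zero]
  rcases lt_or_ge a b with hab | hba
  · rw [if_neg hab.ne]
    exact sum_eq_zero fun m hm => by
      simp [Nat.choose_eq_zero_of_lt (by simp at hm; omega : m < b)]
  obtain ⟨c, rfl⟩ := Nat.exists_eq_add_of_le hba
  have hhead : ∑ m ∈ range b, (-1 : ℤ) ^ m * (b + c).choose m * m.choose b = 0 :=
    sum_eq_zero fun m hm => by simp [Nat.choose_eq_zero_of_lt (mem_range.mp hm)]
  have hterm (d : ℕ) : (-1 : ℤ) ^ (b + d) * (b + c).choose (b + d) * (b + d).choose b =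
      (-1) ^ b * (b + c).choose b * ((-1) ^ d * c.choose d) := by
    have := Nat.choose_mul (n := b + c) (k := b + d) (s := b) le_self_add
    simp only [Nat.add_sub_cancel_left] at this
    rw [pow_add, mul_assoc, ← Nat.cast_mul, this]
    push_cast
    ring
  rw [show b + c + 1 = b + (c + 1) by omega, sum_range_add, hhead, zero_add]
  simp only [hterm, ← mul_sum, Int.alternating_sum_range_choose]
  rcases c with _ | c <;> simp

theorem Tmat_mul_self (n : ℕ) : Tmat n * Tmat n = 1 := by
  ext a b
  have hsum : ∑ m ∈ range (n + 1), (-1 : ℤ) ^ m * ((a : ℕ) + 1).choose m * m.choose ((b : ℕ) + 1)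
      = if a = b then (-1) ^ ((b : ℕ) + 1) else 0 := by
    rw [sum_range_neg_one_pow_mul_choose_mul_choose _ (by omega)]
    simp [Fin.ext_iff]
  rw [sum_range_succ', Nat.choose_zero_succ, Nat.cast_zero, mul_zero, add_zero,
    ← Fin.sum_univ_eq_sum_range] at hsum
  calc ∑ c, Tmat n a c * Tmat n c b
      = (-1) ^ ((b : ℕ) + 1) * ((∑ c : Fin n, (-1 : ℤ) ^ ((c : ℕ) + 1) *
          ((a : ℕ) + 1).choose ((c : ℕ) + 1) * ((c : ℕ) + 1).choose ((b : ℕ) + 1) : ℤ) : ℝ) := by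
        push_cast
        rw [mul_sum]
        exact sum_congr rfl fun c _ => by simp only [Tmat]; ring
    _ = (1 : Matrix (Fin n) (Fin n) ℝ) a b := by
        rw [hsum, one_apply]
        split_ifs <;> simp [← pow_add, ← two_mul]

-- Vectors are indexed from `1`; `g 0 = 0` makes the first row need no special case.
theorem sum_range_tridiagonal_mul {n k : ℕ} (hk : k < n) (α δ β : ℝ) (g : ℕ → ℝ)
    (hg : g 0 = 0) (hβ : k + 1 = n → β = 0) :
    ∑ l ∈ range n, (if k = l then δ else if k = l + 1 then α else if l = k + 1 then β else 0) *
      g (l + 1) = α * g k + δ * g (k + 1) + β * g (k + 2) := by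
  have hsplit (l : ℕ) :
      (if k = l then δ else if k = l + 1 then α else if l = k + 1 then β else 0) * g (l + 1) =
        (if l + 1 = k then α * g k else 0) + (if l = k then δ * g (k + 1) else 0) +
          (if l = k + 1 then β * g (k + 2) else 0) := by
    split_ifs <;> subst_vars <;> first | omega | simp
  simp only [hsplit, sum_add_distrib, sum_ite_eq', mem_range, if_pos hk]
  congr 1
  · cases k with
    | zero => simp [hg]
    | succ k => simp [hk.trans' k.lt_succ_self]
  · split_ifs with h
    · rfl
    · simp [hβ (by omega)]

theorem sum_range_mul_upper_bidiagonal {n j : ℕ} (hj : j < n) (g d s : ℕ → ℝ) (hs : s 0 = 0) :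
    ∑ l ∈ range n, g (l + 1) * (if l = j then d (l + 1) else if j = l + 1 then s (l + 1) else 0) =
      g j * s j + g (j + 1) * d (j + 1) := by
  have hsplit (l : ℕ) :
      g (l + 1) * (if l = j then d (l + 1) else if j = l + 1 then s (l + 1) else 0) =
        (if l + 1 = j then g j * s j else 0) + (if l = j then g (j + 1) * d (j + 1) else 0) := by
    split_ifs <;> subst_vars <;> first | omega | simp
  simp only [hsplit, sum_add_distrib, sum_ite_eq', mem_range, if_pos hj]
  congr 1
  cases j with
  | zero => simp [hs]
  | succ j => simp [hj.trans' j.lt_succ_self]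

theorem tridiagonal_row_choose (N : ℝ) (k j : ℕ) :
    ((k : ℝ) + 1) * ((k + 1) + N) / 2 * k.choose (j + 1)
      - ((k : ℝ) + 1) ^ 2 * (k + 1).choose (j + 1)
      + ((k : ℝ) + 1) * ((k + 1) - N) / 2 * (k + 2).choose (j + 1)
    = (k + 1).choose (j + 1) * (((j : ℝ) + 1) * j / 2 - (j + 1) * N)
      - (k + 1).choose j * (j * (N - j) / 2) := by
  have E1 : ((k + 1).choose (j + 1) : ℝ) = k.choose j + k.choose (j + 1) := by
    exact_mod_cast Nat.choose_succ_succ' k j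
  have E2 : ((k + 2).choose (j + 1) : ℝ) = (k + 1).choose j + (k + 1).choose (j + 1) := by
    exact_mod_cast Nat.choose_succ_succ' (k + 1) j
  have E3 : ((k : ℝ) + 1) * k.choose j = (k + 1).choose (j + 1) * ((j : ℝ) + 1) := by
    exact_mod_cast Nat.add_one_mul_choose_eq k j
  have E4 : ((k + 1).choose (j + 1) : ℝ) * ((j : ℝ) + 1) =
      (k + 1).choose j * ((k : ℝ) + 1 - j) := by
    rcases le_or_gt j (k + 1) with h | h
    · rw [show (k : ℝ) + 1 - j = ((k + 1 - j : ℕ) : ℝ) by push_cast [h]; ring]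
      exact_mod_cast Nat.choose_succ_right_eq (k + 1) j
    · simp [Nat.choose_eq_zero_of_lt h, Nat.choose_eq_zero_of_lt (by omega : k + 1 < j + 1)]
  rw [E2]
  rw [E1] at E3 E4 ⊢
  linear_combination (-((k : ℝ) + 1 + N) / 2) * E3 + (-((k : ℝ) + 1 + j - N) / 2) * E4

noncomputable def Bmat (n : ℕ) : Matrix (Fin n) (Fin n) ℝ :=
  fun i j =>
    if (i : ℕ) = (j : ℕ) then
      (((i : ℕ) + 1 : ℝ) * ((i : ℕ) + 1 - 1)) / 2 - ((i : ℕ) + 1 : ℝ) * n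
    else if (j : ℕ) = (i : ℕ) + 1 then
      (((i : ℕ) + 1 : ℝ) * ((n : ℝ) - ((i : ℕ) + 1))) / 2
    else 0

theorem Amat_mul_Tmat (n : ℕ) : Amat n * Tmat n = Tmat n * Bmat n := by
  ext k j
  have hAT := sum_range_tridiagonal_mul k.isLt
    ((((k : ℕ) + 1 : ℝ) * (((k : ℕ) + 1) + n)) / 2) (-(((k : ℕ) + 1 : ℝ) ^ 2))
    ((((k : ℕ) + 1 : ℝ) * (((k : ℕ) + 1 : ℝ) - n)) / 2)
    (fun L => (-1 : ℝ) ^ ((j : ℕ) + 1) * L.choose ((j : ℕ) + 1)) (by simp)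
    (fun h => by simp [← h])
  have hTB := sum_range_mul_upper_bidiagonal j.isLt
    (fun L => (-1 : ℝ) ^ L * ((k : ℕ) + 1).choose L)
    (fun L => (L : ℝ) * (L - 1) / 2 - L * n) (fun L => (L : ℝ) * (n - L) / 2) (by simp)
  rw [← Fin.sum_univ_eq_sum_range] at hAT hTB
  push_cast at hTB
  rw [mul_apply, mul_apply]
  refine hAT.trans (Eq.trans ?_ hTB.symm)
  linear_combination (-1 : ℝ) ^ ((j : ℕ) + 1) * tridiagonal_row_choose n k j

theorem stmt7_general (n : ℕ) (i j : Fin n) :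
    (Tmat n * Amat n * Tmat n) i j =
      if (i : ℕ) = (j : ℕ) then
        (((i : ℕ) + 1 : ℝ) * ((i : ℕ) + 1 - 1)) / 2 - ((i : ℕ) + 1 : ℝ) * n
      else if (j : ℕ) = (i : ℕ) + 1 then
        (((i : ℕ) + 1 : ℝ) * ((n : ℝ) - ((i : ℕ) + 1))) / 2
      else 0 := by
  have hTAT : Tmat n * Amat n * Tmat n = Bmat n := by
    rw [Matrix.mul_assoc, Amat_mul_Tmat, ← Matrix.mul_assoc, Tmat_mul_self, Matrix.one_mul]
  rw [hTAT]
  rfl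

theorem stmt7 (n : ℕ) (hn : 0 < n) (i j : Fin n) :
    (Tmat n * Amat n * Tmat n) i j =
      if (i : ℕ) = (j : ℕ) then
        (((i : ℕ) + 1 : ℝ) * ((i : ℕ) + 1 - 1)) / 2 - ((i : ℕ) + 1 : ℝ) * n
      else if (j : ℕ) = (i : ℕ) + 1 then
        (((i : ℕ) + 1 : ℝ) * ((n : ℝ) - ((i : ℕ) + 1))) / 2
      else 0 :=
  stmt7_general n i j
end

section
/- Let n be a positive integer and let A_n be the n×n tridiagonal matrix with [A_n]_{k,k} = −k², [A_n]_{k,k−1} = k(k+n)/2, [A_n]_{k,k+1} = k(k−n)/2. Then A_n has n distinct negative eigenvalues, given by γ_{k,n} = k(k−1)/2 − n(n+1)/2 for 1 ≤ k ≤ n. In particular, A_n is invertible. -/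
open Finset Matrix

/-- `γ_{k,n} = k(k-1)/2 - n(n+1)/2`. -/
noncomputable def gam (n k : ℕ) : ℝ := (k : ℝ) * ((k : ℝ) - 1) / 2 - (n : ℝ) * ((n : ℝ) + 1) / 2

/-!
In the binomial basis `k ↦ C(k, j)` the three-term operator defining `A_n` is upper bidiagonal:
it sends `C(·, j+1)` to `γ_{n-j,n} C(·, j+1) + j(j-n)/2 · C(·, j)`. Since `C(0, j+1) = 0` and the
superdiagonal coefficient vanishes in the last row, this says `A_n P = P U` for the unitriangular
Pascal matrix `P = (C(i, j))_{1 ≤ i, j ≤ n}` and an upper triangular `U` with diagonal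
`γ_{n,n}, …, γ_{1,n}`. Hence `A_n` and `U` have the same characteristic polynomial.
-/

open Polynomial

lemma Fin.sum_ite_val_eq {M : Type*} [AddCommMonoid M] (n m : ℕ) (c : M) :
    ∑ l : Fin n, (if (l : ℕ) = m then c else 0) = if m < n then c else 0 := by
  rw [Fin.sum_univ_eq_sum_range (fun l => if l = m then c else 0), sum_ite_eq']
  simp

lemma Nat.cast_succ_mul_choose_succ {R : Type*} [CommRing R] (N j : ℕ) :
    ((j : R) + 1) * N.choose (j + 1) = ((N : R) - j) * N.choose j := by
  rcases le_or_gt j N with h | h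
  · have := congrArg (Nat.cast : ℕ → R) (Nat.choose_succ_right_eq N j)
    push_cast [Nat.cast_sub h] at this
    linear_combination this
  · simp [Nat.choose_eq_zero_of_lt h, Nat.choose_eq_zero_of_lt (h.trans (Nat.lt_succ_self j))]

lemma tridiagonal_choose_eq (n k j : ℕ) :
    ((k : ℝ) + 1) * (k + 1 + n) / 2 * k.choose (j + 1)
      - ((k : ℝ) + 1) ^ 2 * (k + 1).choose (j + 1)
      + ((k : ℝ) + 1) * (k + 1 - n) / 2 * (k + 2).choose (j + 1)
    = ((j + 1) * j / 2 - n * (j + 1)) * (k + 1).choose (j + 1)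
      + (j : ℝ) * (j - n) / 2 * (k + 1).choose j := by
  have pascal₁ := congrArg (Nat.cast : ℕ → ℝ) (Nat.choose_succ_succ' k j)
  have pascal₂ : ((k + 2).choose (j + 1) : ℝ) = (k + 1).choose j + (k + 1).choose (j + 1) := by
    exact_mod_cast Nat.choose_succ_succ' (k + 1) j
  have rel₁ := Nat.cast_succ_mul_choose_succ (R := ℝ) k j
  have rel₂ := Nat.cast_succ_mul_choose_succ (R := ℝ) (k + 1) j
  push_cast at pascal₁ rel₂
  linear_combination ((k : ℝ) + 1 + n) / 2 * (rel₁ - ((k : ℝ) - j) * pascal₁)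
    + ((k : ℝ) + 1) * (k + 1 - n) / 2 * pascal₂ - ((k : ℝ) + 1 + j - n) / 2 * rel₂

lemma Amat_mul_apply (n : ℕ) (f : ℕ → ℝ) (hf : f 0 = 0) (i : Fin n) :
    ∑ l : Fin n, Amat n i l * f (l + 1) =
      ((i : ℝ) + 1) * (i + 1 + n) / 2 * f i - ((i : ℝ) + 1) ^ 2 * f (i + 1)
        + ((i : ℝ) + 1) * (i + 1 - n) / 2 * f (i + 2) := by
  have hsplit : ∀ l : Fin n, Amat n i l * f (l + 1) =
      (if (l : ℕ) = i - 1 then ((i : ℝ) + 1) * (i + 1 + n) / 2 * f i else 0)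
      + (if (l : ℕ) = i then -((i : ℝ) + 1) ^ 2 * f (i + 1) else 0)
      + (if (l : ℕ) = i + 1 then ((i : ℝ) + 1) * (i + 1 - n) / 2 * f (i + 2) else 0) := by
    intro l
    unfold Amat
    generalize (i : ℕ) = a
    generalize (l : ℕ) = b
    rcases Nat.eq_zero_or_pos a with rfl | ha <;>
      split_ifs <;> subst_vars <;> first | omega | contradiction | simp [hf]
  simp only [hsplit, sum_add_distrib, Fin.sum_ite_val_eq]
  rw [if_pos (by omega), if_pos i.isLt]
  split_ifs with h
  · ring
  · rw [show ((i : ℕ) : ℝ) + 1 = n by exact_mod_cast (by omega : (i : ℕ) + 1 = n)]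
    ring

noncomputable def pascal (n : ℕ) : Matrix (Fin n) (Fin n) ℝ :=
  fun i j => ((i : ℕ) + 1).choose ((j : ℕ) + 1)

noncomputable def Amat.upperForm (n : ℕ) : Matrix (Fin n) (Fin n) ℝ :=
  fun i j => if j = i then gam n (n - i) else if (j : ℕ) = i + 1 then (j : ℝ) * (j - n) / 2 else 0

lemma pascal_det (n : ℕ) : (pascal n).det = 1 := by
  rw [det_of_isLowerTriangular _ (fun i j hij => ?_)]
  · simp [pascal]
  · simp only [pascal, Nat.cast_eq_zero]
    exact Nat.choose_eq_zero_of_lt (by simpa using hij)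

lemma Amat.upperForm_isUpperTriangular (n : ℕ) : (Amat.upperForm n).IsUpperTriangular := by
  intro i j (hij : j < i)
  simp only [Amat.upperForm]
  rw [if_neg hij.ne, if_neg (by omega)]

lemma gam_sub {n j : ℕ} (h : j ≤ n) : gam n (n - j) = (j + 1) * j / 2 - n * (j + 1) := by
  rw [gam, Nat.cast_sub h]
  ring

lemma pascal_mul_upperForm_apply (n : ℕ) (k j : Fin n) :
    (pascal n * Amat.upperForm n) k j =
      ((k : ℕ) + 1).choose ((j : ℕ) + 1) * gam n (n - j)
        + ((k : ℕ) + 1).choose (j : ℕ) * ((j : ℝ) * (j - n) / 2) := by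
  have hsplit : ∀ l : Fin n, pascal n k l * Amat.upperForm n l j =
      (if (l : ℕ) = j then ((k : ℕ) + 1).choose ((j : ℕ) + 1) * gam n (n - j) else 0)
      + (if (l : ℕ) = j - 1 then ((k : ℕ) + 1).choose (j : ℕ) * ((j : ℝ) * (j - n) / 2) else 0) := by
    intro l
    simp only [pascal, Amat.upperForm, Fin.ext_iff]
    generalize (j : ℕ) = b
    generalize (l : ℕ) = a
    rcases Nat.eq_zero_or_pos b with rfl | hb <;>
      split_ifs <;> subst_vars <;> first | omega | contradiction | simp
  rw [mul_apply]
  simp only [hsplit, sum_add_distrib, Fin.sum_ite_val_eq]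
  rw [if_pos j.isLt, if_pos (by omega)]

lemma Amat_mul_pascal (n : ℕ) : Amat n * pascal n = pascal n * Amat.upperForm n := by
  ext k j
  rw [pascal_mul_upperForm_apply, mul_apply, gam_sub j.isLt.le]
  simp only [pascal]
  rw [Amat_mul_apply n (fun m => (m.choose ((j : ℕ) + 1) : ℝ)) (by simp) k]
  linear_combination tridiagonal_choose_eq n k j

lemma Amat_charpoly (n : ℕ) : (Amat n).charpoly = ∏ i : Fin n, (X - C (gam n (n - i))) := by
  have hP : IsUnit (pascal n).det := by simp [pascal_det]
  have hconj : Amat n = pascal n * Amat.upperForm n * (pascal n)⁻¹ := by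
    rw [← Amat_mul_pascal, mul_nonsing_inv_cancel_right _ _ hP]
  rw [hconj, charpoly_mul_comm, nonsing_inv_mul_cancel_left _ _ hP,
    charpoly_of_isUpperTriangular _ (Amat.upperForm_isUpperTriangular n)]
  simp [Amat.upperForm]

lemma range_gam_sub (n : ℕ) :
    Set.range (fun i : Fin n => gam n (n - i)) = (fun k : ℕ => gam n k) '' Set.Icc 1 n := by
  ext x
  constructor
  · rintro ⟨i, rfl⟩
    exact ⟨n - i, ⟨by omega, by omega⟩, rfl⟩
  · rintro ⟨k, ⟨hk1, hkn⟩, rfl⟩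
    exact ⟨⟨n - k, by omega⟩, by simp only [Nat.sub_sub_self hkn]⟩

lemma Amat_spectrum (n : ℕ) :
    spectrum ℝ (Amat n) = (fun k : ℕ => gam n k) '' Set.Icc 1 n := by
  ext μ
  rw [← range_gam_sub, mem_spectrum_iff_isRoot_charpoly, Amat_charpoly, isRoot_prod]
  simp [sub_eq_zero, eq_comm]

lemma gam_neg {n k : ℕ} (hk : k ∈ Set.Icc 1 n) : gam n k < 0 := by
  obtain ⟨hk1, hkn⟩ := hk
  have h1 : (1 : ℝ) ≤ k := by exact_mod_cast hk1
  have h2 : (k : ℝ) ≤ n := by exact_mod_cast hkn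
  rw [gam]
  nlinarith

lemma gam_strictMonoOn (n : ℕ) : StrictMonoOn (fun k : ℕ => gam n k) (Set.Ici 1) := by
  intro a (ha : 1 ≤ a) b _ (hab : a < b)
  have h1 : (1 : ℝ) ≤ a := by exact_mod_cast ha
  have h2 : (a : ℝ) + 1 ≤ b := by exact_mod_cast hab
  simp only [gam]
  nlinarith

theorem stmt8_general (n : ℕ) :
    spectrum ℝ (Amat n) = (fun k : ℕ => gam n k) '' (Set.Icc 1 n)
      ∧ (∀ k ∈ Set.Icc 1 n, gam n k < 0)
      ∧ Set.InjOn (fun k : ℕ => gam n k) (Set.Icc 1 n)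
      ∧ IsUnit (Amat n) := by
  refine ⟨Amat_spectrum n, fun k hk => gam_neg hk,
    (gam_strictMonoOn n).injOn.mono fun k hk => hk.1, ?_⟩
  rw [← spectrum.zero_notMem_iff ℝ, Amat_spectrum]
  rintro ⟨k, hk, hk0⟩
  exact (gam_neg hk).ne hk0

theorem stmt8 (n : ℕ) (hn : 0 < n) :
    spectrum ℝ (Amat n) = (fun k : ℕ => gam n k) '' (Set.Icc 1 n)
      ∧ (∀ k ∈ Set.Icc 1 n, gam n k < 0)
      ∧ Set.InjOn (fun k : ℕ => gam n k) (Set.Icc 1 n)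
      ∧ IsUnit (Amat n) :=
  stmt8_general n
end
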